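/- arXiv:2009.03215 — 5 statements merged into one kernel-verified Lean document; each statement's English description precedes it below -/
import Mathlib

section
/- For every n ≥ 3, the cardinalities satisfy |Z_n| = |Z_{n−1}| + |Z_{n−2}|. -/
/-! The indices of the factors of `w ∈ Z_n` are pairwise at distance at least 2, so `w` swaps
`i` and `i + 1` for each index `i` and fixes every other point. Hence `w` is determined by its
index set, which can be any subset of `{0, …, n - 2}` without two consecutive elements, and
counting these subsets by whether they contain `n - 2` gives the Fibonacci recursion. -/

open MvPolynomial

/-- Index type for the Plücker variables `P_J`: nonempty proper subsets of `{1,…,n}`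
(encoded as `Fin n`, where `i : Fin n` stands for the value `i+1`). -/
abbrev PIdx (n : ℕ) := {J : Finset (Fin n) // J.Nonempty ∧ J ≠ Finset.univ}

/-- The transposition (1 2) acting on (1-based) row indices. -/
def swap12 (r : ℕ) : ℕ := if r = 1 then 2 else if r = 2 then 1 else r

/-- The image of the Plücker variable `P_J` under the monomial map `φ_ℓ` associated to the
block diagonal matching field `B_ℓ`: writing `J = {j_1 < … < j_k}` (as 1-based values),
it is `sgn(σ)·x_{σ(1),j_1}⋯x_{σ(k),j_k}` where `σ = id` if `|J| = 1` or
`|J ∩ {1,…,ℓ}| ≥ 2`, and `σ = (1 2)` otherwise. Variables `x_{i,j}` are indexed by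
pairs of 1-based natural numbers. -/
noncomputable def phiVal (K : Type*) [CommRing K] (n ℓ : ℕ) (J : Finset (Fin n)) :
    MvPolynomial (ℕ × ℕ) K :=
  let l : List ℕ := (J.sort (· ≤ ·)).map (fun j => (j : ℕ) + 1)
  if J.card = 1 ∨ 2 ≤ (J.filter (fun j : Fin n => (j : ℕ) + 1 ≤ ℓ)).card then
    ((List.range l.length).map
      (fun r => (X (r + 1, l.getD r 0) : MvPolynomial (ℕ × ℕ) K))).prod
  else
    - ((List.range l.length).map
      (fun r => (X (swap12 (r + 1), l.getD r 0) : MvPolynomial (ℕ × ℕ) K))).prod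

/-- The monomial map `φ_ℓ : K[P_J] → K[x_{i,j}]`. -/
noncomputable def phiMap (K : Type*) [CommRing K] (n ℓ : ℕ) :
    MvPolynomial (PIdx n) K →ₐ[K] MvPolynomial (ℕ × ℕ) K :=
  aeval (fun J => phiVal K n ℓ J.1)

/-- The matching field ideal `F_{n,ℓ} = ker φ_ℓ`. -/
noncomputable def Fnl (K : Type*) [CommRing K] (n ℓ : ℕ) :
    Ideal (MvPolynomial (PIdx n) K) :=
  RingHom.ker (phiMap K n ℓ)

/-- Componentwise comparison `A ≤ B` of two finsets via their increasing enumerations. -/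
def finsetLE {n : ℕ} (A B : Finset (Fin n)) : Prop :=
  List.Forall₂ (· ≤ ·) (A.sort (· ≤ ·)) (B.sort (· ≤ ·))

/-- The set `{w_1, …, w_k}` of the first `k` values of the one-line notation of `w`. -/
def initSet {n : ℕ} (w : Equiv.Perm (Fin n)) (k : ℕ) : Finset (Fin n) :=
  (Finset.univ.filter (fun i : Fin n => (i : ℕ) < k)).image w

/-- `S_w`: the set of subsets `J` with `J ≰ {w_1,…,w_{|J|}}`. -/
def Sw {n : ℕ} (w : Equiv.Perm (Fin n)) : Set (Finset (Fin n)) :=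
  {J | ¬ finsetLE J (initSet w J.card)}

/-- Index type for the Plücker variables that do not vanish on the Schubert variety `X(w)`. -/
abbrev RIdx (n : ℕ) (w : Equiv.Perm (Fin n)) := {J : PIdx n // J.1 ∉ Sw w}

open Classical in
/-- The projection `π_w` sending `P_J ↦ 0` for `J ∈ S_w` and `P_J ↦ P_J` otherwise. -/
noncomputable def piw (K : Type*) [CommRing K] {n : ℕ} (w : Equiv.Perm (Fin n)) :
    MvPolynomial (PIdx n) K →ₐ[K] MvPolynomial (RIdx n w) K :=
  aeval (fun J => if h : J.1 ∈ Sw w then 0 else X (⟨J, h⟩ : RIdx n w))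

/-- The restricted matching field ideal `F_{n,ℓ,w} = π_w(F_{n,ℓ})`. -/
noncomputable def Fnlw (K : Type*) [CommRing K] (n ℓ : ℕ) (w : Equiv.Perm (Fin n)) :
    Ideal (MvPolynomial (RIdx n w) K) :=
  Ideal.map (piw K w) (Fnl K n ℓ)

/-- An ideal of a polynomial ring is monomial-free if it contains no (nonzero) monomial. -/
def MonomialFree {σ K : Type*} [CommSemiring K] (I : Ideal (MvPolynomial σ K)) : Prop :=
  ∀ m : σ →₀ ℕ, (monomial m (1 : K)) ∉ I

/-- The adjacent transposition `s_{i+1} = (i+1, i+2)` (1-based), i.e. the swap of the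
0-based positions `i` and `i+1` of `Fin n`. -/
def adjT (n i : ℕ) : Equiv.Perm (Fin n) :=
  if h : i + 1 < n then Equiv.swap ⟨i, Nat.lt_of_succ_lt h⟩ ⟨i + 1, h⟩ else 1

/-- `Z_n`: permutations that are products of adjacent transpositions with pairwise
distance at least 2 between the indices. -/
def Zset (n : ℕ) : Set (Equiv.Perm (Fin n)) :=
  {w | ∃ l : List ℕ, (∀ i ∈ l, i + 1 < n) ∧
        l.Pairwise (fun i j => i + 2 ≤ j ∨ j + 2 ≤ i) ∧
        w = (l.map (adjT n)).prod}

/-- `oneLine w i = w_i` : the `i`-th entry (1-based, with 1-based values) of the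
one-line notation of `w`. -/
def oneLine {n : ℕ} (w : Equiv.Perm (Fin n)) (i : ℕ) : ℕ :=
  if h : i - 1 < n then (w ⟨i - 1, h⟩ : ℕ) + 1 else 0

/-- The (1-based) position `t` with `w_t = n`. -/
def posOfTop {n : ℕ} (w : Equiv.Perm (Fin n)) : ℕ :=
  if h : 0 < n then ((w.symm ⟨n - 1, by omega⟩ : ℕ) + 1) else 0

/-- `deleteTop w u` holds iff `u = ul(w)` is obtained from `w` by deleting the entry `n`
from its one-line notation. -/
def deleteTop {n : ℕ} (w : Equiv.Perm (Fin n)) (u : Equiv.Perm (Fin (n - 1))) : Prop :=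
  ∀ i, 1 ≤ i → i ≤ n - 1 →
    oneLine u i = if i < posOfTop w then oneLine w i else oneLine w (i + 1)

/-- The descending property: writing `w_t = n`, one has `w_t > w_{t+1} > … > w_n`. -/
def descendingProp {n : ℕ} (w : Equiv.Perm (Fin n)) : Prop :=
  ∀ i, posOfTop w ≤ i → i < n → oneLine w (i + 1) < oneLine w i

/-- `T_{n,ℓ}`: the set of permutations `w` for which `F_{n,ℓ,w}` is nonzero and
monomial-free. -/
def Tset (K : Type*) [Field K] (n ℓ : ℕ) : Set (Equiv.Perm (Fin n)) :=
  {w | Fnlw K n ℓ w ≠ ⊥ ∧ MonomialFree (Fnlw K n ℓ w)}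

/-- The one-line notation of `w` as a list of 1-based values. -/
def olList {n : ℕ} (w : Equiv.Perm (Fin n)) : List ℕ :=
  (List.finRange n).map (fun i => (w i : ℕ) + 1)

/-- A list of naturals is 312-free if it has no subsequence of type 312. -/
def List312Free (l : List ℕ) : Prop :=
  ¬ ∃ i j k : ℕ, i < j ∧ j < k ∧ k < l.length ∧
      l.getD j 0 < l.getD k 0 ∧ l.getD k 0 < l.getD i 0

/-- The decreasing list `[a, a-1, …, 1]`. -/
def descTo1 (a : ℕ) : List ℕ := (List.range a).reverse.map (· + 1)

/-- The set `P_ℓ ⊆ S_n`. -/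
def Pset (n ℓ : ℕ) : Set (Equiv.Perm (Fin n)) :=
  if ℓ = n then {w | List312Free (olList w)}
  else
    {w | (¬ List312Free (olList w) →
            oneLine w 2 = ℓ ∧ oneLine w 2 < oneLine w 1 ∧
            List312Free ((olList w).erase ℓ)) ∧
         (∀ m, 3 ≤ m → m ≤ n →
            (olList w).filter (fun v => v ≤ m) = (m - 1) :: m :: descTo1 (m - 2) →
            oneLine w 1 < oneLine w 2 ∧ oneLine w 2 ≤ ℓ ∧
            (olList w).filter (fun v => v ≤ oneLine w 2) =
              oneLine w 1 :: oneLine w 2 ::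
                ((descTo1 (oneLine w 2 - 1)).filter (fun v => v ≠ oneLine w 1)))}

/-- The set `A_1`. -/
def A1set (n : ℕ) : Set (Equiv.Perm (Fin n)) :=
  {w | (∃ u : Equiv.Perm (Fin (n - 1)), deleteTop w u ∧ u ∈ Zset (n - 1)) ∧
       oneLine w n = n - 2 ∧
       ({oneLine w (n - 2), oneLine w (n - 1)} : Set ℕ) = {n - 1, n}}

/-- The set `A_2` (with `ul(w) ∈ T_{n-1,ℓ'}`). -/
def A2set (K : Type*) [Field K] (n ℓ' : ℕ) : Set (Equiv.Perm (Fin n)) :=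
  {w | (∃ u : Equiv.Perm (Fin (n - 1)),
          deleteTop w u ∧ u ∈ Tset K (n - 1) ℓ' ∧ descendingProp u) ∧
       (∀ s t, 1 ≤ s → s ≤ n → 1 ≤ t → t ≤ n →
          oneLine w s = n - 1 → oneLine w t = n → s - 1 ≤ t)}

lemma adjT_apply_val {n i : ℕ} (hi : i + 1 < n) (k : Fin n) :
    (adjT n i k : ℕ) = if (k : ℕ) = i then i + 1 else if (k : ℕ) = i + 1 then i else k := by
  simp only [adjT, dif_pos hi, Equiv.swap_apply_def]
  split_ifs <;> simp_all [Fin.ext_iff]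

/-- For `k = 0` the truncated `k - 1 ∈ l` is `0 ∈ l`, already caught by the first branch. -/
lemma prod_map_adjT_apply_val {n : ℕ} {l : List ℕ} (hl : ∀ i ∈ l, i + 1 < n)
    (hfar : l.Pairwise (fun i j => i + 2 ≤ j ∨ j + 2 ≤ i)) (k : Fin n) :
    ((l.map (adjT n)).prod k : ℕ) =
      if (k : ℕ) ∈ l then (k : ℕ) + 1 else if (k : ℕ) - 1 ∈ l then (k : ℕ) - 1 else k := by
  induction l with
  | nil => simp
  | cons a t ih =>
    obtain ⟨hfar_a, hfar_t⟩ := List.pairwise_cons.mp hfar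
    rw [List.map_cons, List.prod_cons, Equiv.Perm.mul_apply,
      adjT_apply_val (hl a List.mem_cons_self),
      ih (fun i hi => hl i (List.mem_cons_of_mem a hi)) hfar_t]
    simp only [List.mem_cons]
    by_cases hkt : (k : ℕ) ∈ t
    · have := hfar_a _ hkt
      simp only [hkt, or_true, if_true]
      split_ifs <;> omega
    by_cases hk1t : (k : ℕ) - 1 ∈ t
    · have := hfar_a _ hk1t
      have hk0 : (k : ℕ) ≠ 0 := fun h => hkt (by rwa [h] at hk1t ⊢)
      simp only [hkt, hk1t, or_false, or_true, if_true, if_false]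
      split_ifs <;> omega
    · simp only [hkt, hk1t, or_false, if_false]
      split_ifs <;> omega

def sparseSubsets (m : ℕ) : Finset (Finset ℕ) :=
  (Finset.range m).powerset.filter fun S => ∀ i ∈ S, i + 1 ∉ S

lemma mem_sparseSubsets {m : ℕ} {S : Finset ℕ} :
    S ∈ sparseSubsets m ↔ (∀ i ∈ S, i < m) ∧ ∀ i ∈ S, i + 1 ∉ S := by
  simp only [sparseSubsets, Finset.mem_filter, Finset.mem_powerset, Finset.subset_iff,
    Finset.mem_range]

lemma sparseSubsets_filter_not_mem (m : ℕ) :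
    (sparseSubsets (m + 2)).filter (fun S => m + 1 ∉ S) = sparseSubsets (m + 1) := by
  ext S
  simp only [Finset.mem_filter, mem_sparseSubsets]
  constructor
  · rintro ⟨⟨hlt, hsparse⟩, hm⟩
    refine ⟨fun i hi => ?_, hsparse⟩
    have := hlt i hi
    have : i ≠ m + 1 := by rintro rfl; exact hm hi
    omega
  · rintro ⟨hlt, hsparse⟩
    exact ⟨⟨fun i hi => (hlt i hi).trans (Nat.lt_succ_self _), hsparse⟩,
      fun hm => (hlt _ hm).false⟩

lemma card_sparseSubsets_filter_mem (m : ℕ) :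
    ((sparseSubsets (m + 2)).filter (fun S => m + 1 ∈ S)).card = (sparseSubsets m).card := by
  refine Finset.card_nbij' (·.erase (m + 1)) (insert (m + 1)) ?_ ?_ ?_ ?_
  · intro S hS
    simp only [Finset.mem_coe, Finset.mem_filter, mem_sparseSubsets] at hS
    obtain ⟨⟨hlt, hsparse⟩, hm⟩ := hS
    simp only [Finset.mem_coe, mem_sparseSubsets, Finset.mem_erase]
    refine ⟨fun i hi => ?_, fun i hi hi' => hsparse i hi.2 hi'.2⟩
    have := hlt i hi.2
    have : i ≠ m := fun h => hsparse i hi.2 (h ▸ hm)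
    omega
  · intro S hS
    simp only [Finset.mem_coe, mem_sparseSubsets] at hS
    obtain ⟨hlt, hsparse⟩ := hS
    simp only [Finset.mem_coe, Finset.mem_filter, mem_sparseSubsets, Finset.mem_insert,
      true_or, and_true]
    refine ⟨fun i hi => ?_, fun i hi hi' => ?_⟩
    · rcases hi with rfl | hi
      · omega
      · exact (hlt i hi).trans (by omega)
    · rcases hi with rfl | hi <;> rcases hi' with h | hi'
      · omega
      · exact absurd (hlt _ hi') (by omega)
      · exact absurd (hlt _ hi) (by omega)
      · exact hsparse i hi hi'
  · intro S hS
    simp only [Finset.mem_coe, Finset.mem_filter] at hS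
    exact Finset.insert_erase hS.2
  · intro S hS
    simp only [Finset.mem_coe, mem_sparseSubsets] at hS
    exact Finset.erase_insert fun hm => absurd (hS.1 _ hm) (by omega)

lemma card_sparseSubsets_add_two (m : ℕ) :
    (sparseSubsets (m + 2)).card = (sparseSubsets (m + 1)).card + (sparseSubsets m).card := by
  rw [← Finset.card_filter_add_card_filter_not (fun S => m + 1 ∈ S),
    sparseSubsets_filter_not_mem, card_sparseSubsets_filter_mem, add_comm]

noncomputable def adjTProd (n : ℕ) (S : Finset ℕ) : Equiv.Perm (Fin n) :=
  ((S.sort (· ≤ ·)).map (adjT n)).prod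

lemma pairwise_sort_of_mem_sparseSubsets {m : ℕ} {S : Finset ℕ} (hS : S ∈ sparseSubsets m) :
    (S.sort (· ≤ ·)).Pairwise (fun i j => i + 2 ≤ j ∨ j + 2 ≤ i) := by
  refine (Finset.sortedLT_sort S).pairwise.imp_of_mem fun {i j} hi hj hij => Or.inl ?_
  rw [Finset.mem_sort] at hi hj
  have : j ≠ i + 1 := fun h => (mem_sparseSubsets.mp hS).2 i hi (h ▸ hj)
  omega

lemma lt_of_mem_sort_of_mem_sparseSubsets {n : ℕ} {S : Finset ℕ}
    (hS : S ∈ sparseSubsets (n - 1)) : ∀ i ∈ S.sort (· ≤ ·), i + 1 < n := by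
  intro i hi
  have := (mem_sparseSubsets.mp hS).1 i ((Finset.mem_sort _).mp hi)
  omega

lemma adjTProd_mem_Zset {n : ℕ} {S : Finset ℕ} (hS : S ∈ sparseSubsets (n - 1)) :
    adjTProd n S ∈ Zset n :=
  ⟨_, lt_of_mem_sort_of_mem_sparseSubsets hS, pairwise_sort_of_mem_sparseSubsets hS, rfl⟩

lemma adjTProd_apply_val {n : ℕ} {S : Finset ℕ} (hS : S ∈ sparseSubsets (n - 1)) (k : Fin n) :
    (adjTProd n S k : ℕ) =
      if (k : ℕ) ∈ S then (k : ℕ) + 1 else if (k : ℕ) - 1 ∈ S then (k : ℕ) - 1 else k := by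
  rw [adjTProd, prod_map_adjT_apply_val (lt_of_mem_sort_of_mem_sparseSubsets hS)
    (pairwise_sort_of_mem_sparseSubsets hS)]
  simp only [Finset.mem_sort]

lemma mem_iff_adjTProd_apply_val {n : ℕ} {S : Finset ℕ} (hS : S ∈ sparseSubsets (n - 1))
    {i : ℕ} (hi : i + 1 < n) : i ∈ S ↔ (adjTProd n S ⟨i, by omega⟩ : ℕ) = i + 1 := by
  rw [adjTProd_apply_val hS]
  split_ifs <;> simp_all

lemma adjTProd_injOn (n : ℕ) : Set.InjOn (adjTProd n) (sparseSubsets (n - 1)) := by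
  intro S hS T hT hST
  ext i
  by_cases hi : i + 1 < n
  · rw [mem_iff_adjTProd_apply_val hS hi, mem_iff_adjTProd_apply_val hT hi, hST]
  · exact iff_of_false (fun h => hi (by have := (mem_sparseSubsets.mp hS).1 i h; omega))
      (fun h => hi (by have := (mem_sparseSubsets.mp hT).1 i h; omega))

lemma Zset_eq_image (n : ℕ) : Zset n = (sparseSubsets (n - 1)).image (adjTProd n) := by
  ext w
  rw [Finset.coe_image, Set.mem_image]
  constructor
  · rintro ⟨l, hl, hfar, rfl⟩
    have hsparse : l.toFinset ∈ sparseSubsets (n - 1) := by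
      have : Std.Symm (fun i j : ℕ => i + 2 ≤ j ∨ j + 2 ≤ i) := ⟨fun _ _ => Or.symm⟩
      simp only [mem_sparseSubsets, List.mem_toFinset]
      refine ⟨fun i hi => by have := hl i hi; omega, fun i hi hi' => ?_⟩
      have := hfar.forall hi hi' (by omega)
      omega
    refine ⟨l.toFinset, hsparse, Equiv.ext fun k => Fin.ext ?_⟩
    rw [adjTProd_apply_val hsparse, prod_map_adjT_apply_val hl hfar]
    simp only [List.mem_toFinset]
  · rintro ⟨S, hS, rfl⟩
    exact adjTProd_mem_Zset hS

lemma ncard_Zset (n : ℕ) : (Zset n).ncard = (sparseSubsets (n - 1)).card := by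
  rw [Zset_eq_image, Set.ncard_coe_finset, Finset.card_image_of_injOn (adjTProd_injOn n)]

theorem stmt1 (n : ℕ) (hn : 3 ≤ n) :
    (Zset n).ncard = (Zset (n - 1)).ncard + (Zset (n - 2)).ncard := by
  obtain ⟨m, rfl⟩ : ∃ m, n = m + 3 := ⟨n - 3, by omega⟩
  rw [ncard_Zset, ncard_Zset, ncard_Zset]
  exact card_sparseSubsets_add_two m
end

section
/- Let K be a field of characteristic 0, n ≥ 1, and take the diagonal matching field ℓ = n. If the restricted matching field ideal F_{n,n,w} is nonzero and monomial-free (i.e., w ∈ T_{n,n}), then w has the descending property, i.e. w ∈ S_n^>. -/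
open MvPolynomial

/-!
Suppose `w` is not descending. Then some ascent `a = w_k < b = w_{k+1}` occurs after the position
of `n`, so a value `z > b` precedes it. Put `P = {w_1, …, w_{k-1}}`, `I = P ∪ {a}`, `T = P ∪ {b}`,
and write `S≤b` for the elements of `S` that are at most `b`. Since `I` and `T` have the same size
and agree above `b`, and the diagonal monomial of a set factors as the monomial of its part `≤ b`
times a factor that only sees the part `> b` and the size of the part `≤ b`, the binomial
`P_{T≤b} P_I - P_{I≤b} P_T` lies in `F_{n,n}`. Now `T ≰ I = {w_1, …, w_k}`, so `π_w` kills `P_T`,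
while `P_I` survives, and so does `P_{T≤b}`: it has fewer than `k` elements (`z ∈ I` but `z ∉ I≤b`),
so `{w_1, …, w_{|T≤b|}} ⊆ P ⊆ T`, and `T≤b` is Gale-below every subset of `T` of its size.
Hence the monomial `P_{T≤b} P_I` lies in `F_{n,n,w}`.
-/

open Finset

section SortedLists

variable {α : Type*} [LinearOrder α]

lemma List.countP_lt_le_of_forall₂_le {l₁ l₂ : List α} (h : List.Forall₂ (· ≤ ·) l₁ l₂)
    (c : α) : l₂.countP (· < c) ≤ l₁.countP (· < c) := by
  induction h with
  | nil => simp
  | @cons x y t₁ t₂ hxy _ ih =>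
    by_cases hyc : y < c
    · simp [hyc, hxy.trans_lt hyc, ih]
    · grind

lemma List.forall₂_le_of_countP_lt_le : ∀ {l₁ l₂ : List α}, l₁.Pairwise (· < ·) →
    l₂.Pairwise (· < ·) → l₁.length = l₂.length →
    (∀ c, l₂.countP (· < c) ≤ l₁.countP (· < c)) → List.Forall₂ (· ≤ ·) l₁ l₂
  | [], [], _, _, _, _ => .nil
  | x :: t₁, y :: t₂, h₁, h₂, hlen, h => by
    rw [List.pairwise_cons] at h₁ h₂
    have hxy : x ≤ y := by
      by_contra! hyx
      have := h x
      have : (x :: t₁).countP (· < x) = 0 :=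
        List.countP_eq_zero.2 fun z hz => by
          rcases List.mem_cons.1 hz with rfl | hz
          · simp
          · simp [(h₁.1 z hz).le]
      simp_all [List.countP_cons]
    refine .cons hxy (List.forall₂_le_of_countP_lt_le h₁.2 h₂.2 (by simpa using hlen) fun c => ?_)
    by_cases hyc : y < c
    · simpa [List.countP_cons, hyc, hxy.trans_lt hyc] using h c
    · have : t₂.countP (· < c) = 0 :=
        List.countP_eq_zero.2 fun z hz => by simpa using (not_lt.1 hyc).trans (h₂.1 z hz).le
      omega

lemma Finset.countP_sort_lt (s : Finset α) (c : α) :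
    (s.sort (· ≤ ·)).countP (· < c) = #(s.filter (· < c)) := by
  rw [← Multiset.coe_countP, Finset.sort_eq, Finset.card_def, Finset.filter_val,
    Multiset.countP_eq_card_filter]

lemma Finset.sort_eq_sort_filter_le_append (s : Finset α) (b : α) :
    s.sort (· ≤ ·) = (s.filter (· ≤ b)).sort (· ≤ ·) ++ (s.filter (b < ·)).sort (· ≤ ·) := by
  refine List.Perm.eq_of_pairwise' (Finset.pairwise_sort _ _) ?_ ?_
  · refine List.pairwise_append.2 ⟨Finset.pairwise_sort _ _, Finset.pairwise_sort _ _, ?_⟩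
    simp only [Finset.mem_sort, Finset.mem_filter]
    exact fun x hx y hy => (hx.2.trans_lt hy.2).le
  · rw [← Multiset.coe_eq_coe, ← Multiset.coe_add, Finset.sort_eq, Finset.sort_eq,
      Finset.sort_eq, Finset.filter_val, Finset.filter_val]
    simp only [← not_le]
    exact (Multiset.filter_add_not _ _).symm

lemma Finset.card_filter_le_add_card_filter_lt (s : Finset α) (b : α) :
    #(s.filter (· ≤ b)) + #(s.filter (b < ·)) = #s := by
  simp only [← not_le]
  exact Finset.card_filter_add_card_filter_not _

lemma Finset.card_filter_le_eq_of_filter_lt_eq {s t : Finset α} {b : α} (hcard : #s = #t)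
    (hupper : s.filter (b < ·) = t.filter (b < ·)) : #(s.filter (· ≤ b)) = #(t.filter (· ≤ b)) := by
  have := s.card_filter_le_add_card_filter_lt b
  have := t.card_filter_le_add_card_filter_lt b
  rw [hupper] at *
  omega

lemma Finset.ne_univ_of_notMem {β : Type*} [Fintype β] {s : Finset β} {x : β} (hx : x ∉ s) :
    s ≠ univ :=
  fun h => hx (h ▸ mem_univ x)

end SortedLists

section SchubertConditions

variable {n : ℕ}

lemma card_filter_lt_le_of_finsetLE {A B : Finset (Fin n)} (h : finsetLE A B) (c : Fin n) :
    #(B.filter (· < c)) ≤ #(A.filter (· < c)) := by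
  simpa only [Finset.countP_sort_lt] using List.countP_lt_le_of_forall₂_le h c

lemma finsetLE_of_card_filter_lt_le {A B : Finset (Fin n)} (hcard : #A = #B)
    (h : ∀ c, #(B.filter (· < c)) ≤ #(A.filter (· < c))) : finsetLE A B :=
  List.forall₂_le_of_countP_lt_le (Finset.sortedLT_sort A).pairwise
    (Finset.sortedLT_sort B).pairwise (by simpa using hcard)
    (by simpa only [Finset.countP_sort_lt] using h)

lemma finsetLE_refl (A : Finset (Fin n)) : finsetLE A A :=
  List.forall₂_same.2 fun _ _ => le_rfl

lemma finsetLE_filter_le_of_subset {T W : Finset (Fin n)} {b : Fin n} (hW : W ⊆ T)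
    (hcard : #(T.filter (· ≤ b)) = #W) : finsetLE (T.filter (· ≤ b)) W := by
  refine finsetLE_of_card_filter_lt_le hcard fun c => ?_
  by_cases hcb : c ≤ b
  · refine Finset.card_le_card fun x hx => ?_
    simp only [Finset.mem_filter] at hx ⊢
    exact ⟨⟨hW hx.1, hx.2.le.trans hcb⟩, hx.2⟩
  · rw [Finset.filter_true_of_mem (s := T.filter (· ≤ b))
      fun x hx => (Finset.mem_filter.1 hx).2.trans_lt (not_le.1 hcb), hcard]
    exact Finset.card_filter_le _ _

lemma not_finsetLE_insert_insert {P : Finset (Fin n)} {a b : Fin n} (ha : a ∉ P) (hab : a < b) :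
    ¬ finsetLE (insert b P) (insert a P) := by
  intro h
  have := card_filter_lt_le_of_finsetLE h b
  rw [Finset.filter_insert, Finset.filter_insert, if_pos hab, if_neg (lt_irrefl b),
    Finset.card_insert_of_notMem fun h => ha (Finset.mem_filter.1 h).1] at this
  omega

variable (w : Equiv.Perm (Fin n))

lemma mem_initSet {x : Fin n} {k : ℕ} : x ∈ initSet w k ↔ (w.symm x : ℕ) < k := by
  simp only [initSet, Finset.mem_image, Finset.mem_filter, Finset.mem_univ, true_and]
  exact ⟨by rintro ⟨j, hj, rfl⟩; simpa using hj, fun h => ⟨w.symm x, h, by simp⟩⟩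

lemma initSet_mono {k k' : ℕ} (h : k ≤ k') : initSet w k ⊆ initSet w k' := fun x hx => by
  rw [mem_initSet] at hx ⊢
  omega

lemma card_initSet {k : ℕ} (hk : k ≤ n) : #(initSet w k) = k := by
  rw [initSet, Finset.card_image_of_injective _ w.injective, Fin.card_filter_val_lt]
  omega

lemma apply_notMem_initSet {k : ℕ} (hk : k < n) : w ⟨k, hk⟩ ∉ initSet w k := by
  simp [mem_initSet]

lemma initSet_succ {k : ℕ} (hk : k < n) :
    initSet w (k + 1) = insert (w ⟨k, hk⟩) (initSet w k) := by
  ext x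
  simp only [Finset.mem_insert, mem_initSet, ← Equiv.symm_apply_eq, Fin.ext_iff]
  omega

lemma initSet_notMem_Sw {k : ℕ} (hk : k ≤ n) : initSet w k ∉ Sw w := by
  simpa [Sw, card_initSet w hk] using finsetLE_refl (initSet w k)

lemma insert_initSet_mem_Sw {k : ℕ} (hk : k < n) {b : Fin n} (hb : b ∉ initSet w k)
    (hkb : w ⟨k, hk⟩ < b) : insert b (initSet w k) ∈ Sw w := by
  change ¬ finsetLE _ (initSet w _)
  rw [card_insert_of_notMem hb, card_initSet w hk.le, initSet_succ w hk]
  exact not_finsetLE_insert_insert (apply_notMem_initSet w hk) hkb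

lemma filter_le_notMem_Sw {k : ℕ} {T : Finset (Fin n)} {b : Fin n} (hT : initSet w k ⊆ T)
    (hcard : #(T.filter (· ≤ b)) ≤ k) (hk : k ≤ n) : T.filter (· ≤ b) ∉ Sw w := by
  change ¬ ¬ finsetLE _ (initSet w _)
  exact not_not.2 <| finsetLE_filter_le_of_subset ((initSet_mono w hcard).trans hT)
    (card_initSet w (hcard.trans hk)).symm

end SchubertConditions

section MatchingField

variable (K : Type*) [CommRing K]

noncomputable def rowProd (off : ℕ) (l : List ℕ) : MvPolynomial (ℕ × ℕ) K :=
  ((List.range l.length).map fun r => X (off + r + 1, l.getD r 0)).prod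

lemma rowProd_append (off : ℕ) (l₁ l₂ : List ℕ) :
    rowProd K off (l₁ ++ l₂) = rowProd K off l₁ * rowProd K (off + l₁.length) l₂ := by
  unfold rowProd
  rw [List.length_append, List.range_add, List.map_append, List.prod_append, List.map_map]
  congr 2
  · refine List.map_congr_left fun r hr => ?_
    rw [List.getD_append _ _ _ _ (List.mem_range.1 hr)]
  · refine List.map_congr_left fun r _ => ?_
    simp only [Function.comp, List.getD_append_right _ _ _ _ (Nat.le_add_right _ _),
      Nat.add_sub_cancel_left, Nat.add_assoc]

variable {K} {n : ℕ}

lemma phiVal_self_eq_rowProd {J : Finset (Fin n)} (hJ : J.Nonempty) :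
    phiVal K n n J = rowProd K 0 ((J.sort (· ≤ ·)).map fun j : Fin n => (j : ℕ) + 1) := by
  have hcond : #J = 1 ∨ 2 ≤ #(J.filter fun j : Fin n => (j : ℕ) + 1 ≤ n) := by
    rw [Finset.filter_true_of_mem fun j _ => j.isLt]
    have := hJ.card_pos
    omega
  -- `phiVal` casts the sorted list to `List ℕ` through the list monad.
  have hcoe : (do let a ← J.sort (· ≤ ·); pure (a : ℕ)) = (J.sort (· ≤ ·)).map (↑) := by
    rw [List.map_eq_flatMap]; rfl
  simp only [phiVal, if_pos hcond, rowProd, hcoe, List.map_map, Nat.zero_add]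
  rfl

end MatchingField

section MatchingFieldIdeal

variable {K : Type*} [CommRing K] {n : ℕ}

lemma phiVal_self_eq_mul_rowProd (J : Finset (Fin n)) (b : Fin n)
    (hJ : (J.filter (· ≤ b)).Nonempty) :
    phiVal K n n J = phiVal K n n (J.filter (· ≤ b)) *
      rowProd K #(J.filter (· ≤ b))
        (((J.filter (b < ·)).sort (· ≤ ·)).map fun j : Fin n => (j : ℕ) + 1) := by
  rw [phiVal_self_eq_rowProd (hJ.mono (Finset.filter_subset _ _)), phiVal_self_eq_rowProd hJ,
    J.sort_eq_sort_filter_le_append b, List.map_append, rowProd_append, List.length_map,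
    Finset.length_sort, Nat.zero_add]

lemma phiVal_self_exchange {S T : Finset (Fin n)} {b : Fin n} (hcard : #S = #T)
    (hupper : S.filter (b < ·) = T.filter (b < ·)) (hS : (S.filter (· ≤ b)).Nonempty)
    (hT : (T.filter (· ≤ b)).Nonempty) :
    phiVal K n n (T.filter (· ≤ b)) * phiVal K n n S =
      phiVal K n n (S.filter (· ≤ b)) * phiVal K n n T := by
  have hlower := card_filter_le_eq_of_filter_lt_eq hcard hupper
  rw [phiVal_self_eq_mul_rowProd S b hS, phiVal_self_eq_mul_rowProd T b hT, hupper, hlower]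
  ring

lemma X_mul_X_sub_X_mul_X_mem_Fnl {ℓ : ℕ} {J₁ J₂ J₃ J₄ : PIdx n}
    (h : phiVal K n ℓ J₁ * phiVal K n ℓ J₂ = phiVal K n ℓ J₃ * phiVal K n ℓ J₄) :
    X J₁ * X J₂ - X J₃ * X J₄ ∈ Fnl K n ℓ := by
  simp [Fnl, RingHom.mem_ker, phiMap, h]

lemma piw_X_of_mem {w : Equiv.Perm (Fin n)} {J : PIdx n} (h : J.1 ∈ Sw w) :
    piw K w (X J) = 0 := by
  rw [piw, aeval_X, dif_pos h]

lemma piw_X_of_notMem {w : Equiv.Perm (Fin n)} {J : PIdx n} (h : J.1 ∉ Sw w) :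
    piw K w (X J) = X ⟨J, h⟩ := by
  rw [piw, aeval_X, dif_neg h]

lemma not_monomialFree_Fnlw {ℓ : ℕ} {w : Equiv.Perm (Fin n)} {J₁ J₂ J₃ J₄ : PIdx n}
    (h : X J₁ * X J₂ - X J₃ * X J₄ ∈ Fnl K n ℓ) (h₁ : J₁.1 ∉ Sw w) (h₂ : J₂.1 ∉ Sw w)
    (h₄ : J₄.1 ∈ Sw w) : ¬ MonomialFree (Fnlw K n ℓ w) := by
  intro hfree
  apply hfree (Finsupp.single ⟨J₁, h₁⟩ 1 + Finsupp.single ⟨J₂, h₂⟩ 1)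
  have : piw K w (X J₁ * X J₂ - X J₃ * X J₄) ∈ Fnlw K n ℓ w := Ideal.mem_map_of_mem _ h
  rw [map_sub, map_mul, map_mul, piw_X_of_notMem h₁, piw_X_of_notMem h₂, piw_X_of_mem h₄,
    mul_zero, sub_zero] at this
  simpa [X, monomial_mul] using this

end MatchingFieldIdeal

section Descending

variable {n : ℕ}

lemma oneLine_succ (w : Equiv.Perm (Fin n)) {k : ℕ} (hk : k < n) :
    oneLine w (k + 1) = w ⟨k, hk⟩ + 1 := by
  simp [oneLine, hk]

lemma exists_ascent_of_not_descendingProp {w : Equiv.Perm (Fin n)} (h : ¬ descendingProp w) :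
    ∃ (k : ℕ) (hk : k + 1 < n), w ⟨k, by omega⟩ < w ⟨k + 1, hk⟩ ∧
      ∃ z ∈ initSet w (k + 1), w ⟨k + 1, hk⟩ < z := by
  simp only [descendingProp, not_forall, not_lt] at h
  obtain ⟨i, hti, hin, hle⟩ := h
  have hn : 0 < n := by omega
  have hz : ((w.symm ⟨n - 1, by omega⟩ : Fin n) : ℕ) < i := by
    rw [posOfTop, dif_pos hn] at hti
    omega
  obtain ⟨k, rfl⟩ : ∃ k, i = k + 1 := ⟨i - 1, by omega⟩
  have hbz : w ⟨k + 1, hin⟩ ≠ ⟨n - 1, by omega⟩ := fun hb => by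
    rw [← hb, Equiv.symm_apply_apply] at hz
    exact lt_irrefl _ hz
  refine ⟨k, hin, ?_, _, (mem_initSet w).2 hz, ?_⟩
  · have hne : w ⟨k, by omega⟩ ≠ w ⟨k + 1, hin⟩ := w.injective.ne (by simp [Fin.ext_iff])
    refine lt_of_le_of_ne ?_ hne
    rw [oneLine_succ w (by omega), oneLine_succ w hin] at hle
    exact Fin.le_def.2 (by omega)
  · have := (w ⟨k + 1, hin⟩).isLt
    have := Fin.val_ne_of_ne hbz
    rw [Fin.lt_def]
    dsimp only at this ⊢
    omega

end Descending

section Ascent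

variable {n : ℕ}

lemma not_monomialFree_Fnlw_of_ascent (K : Type*) [CommRing K] {w : Equiv.Perm (Fin n)} {k : ℕ}
    (hk : k + 1 < n) (hab : w ⟨k, by omega⟩ < w ⟨k + 1, hk⟩)
    (htop : ∃ z ∈ initSet w (k + 1), w ⟨k + 1, hk⟩ < z) : ¬ MonomialFree (Fnlw K n n w) := by
  obtain ⟨z, hzI, hbz⟩ := htop
  set a := w ⟨k, by omega⟩
  set b := w ⟨k + 1, hk⟩
  set P := initSet w k
  have haP : a ∉ P := apply_notMem_initSet w _
  have hbP : b ∉ P := fun h => apply_notMem_initSet w hk (initSet_mono w k.le_succ h)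
  have hI : initSet w (k + 1) = insert a P := initSet_succ w _
  set I := insert a P
  set T := insert b P
  have haT : a ∉ T := by simp [T, hab.ne, haP]
  have hbI : b ∉ I := by simp [I, hab.ne', hbP]
  have hIcard : #I = k + 1 := by rw [← hI, card_initSet w (by omega)]
  have hTcard : #T = k + 1 := by rw [card_insert_of_notMem hbP, card_initSet w (by omega)]
  have hupper : I.filter (b < ·) = T.filter (b < ·) := by
    rw [filter_insert, filter_insert, if_neg (lt_asymm hab), if_neg (lt_irrefl b)]
  have hlower : #(T.filter (· ≤ b)) ≤ k := by
    rw [← card_filter_le_eq_of_filter_lt_eq (hIcard.trans hTcard.symm) hupper, ← Nat.lt_succ_iff,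
      Nat.succ_eq_add_one, ← hIcard]
    exact card_lt_card (filter_ssubset.2 ⟨z, hI ▸ hzI, not_le.2 hbz⟩)
  have hIS : I ∉ Sw w := hI ▸ initSet_notMem_Sw w (by omega)
  have hTS : T ∈ Sw w := insert_initSet_mem_Sw w _ hbP hab
  have hXS : T.filter (· ≤ b) ∉ Sw w := filter_le_notMem_Sw w (subset_insert _ _) hlower (by omega)
  have hYne : (I.filter (· ≤ b)).Nonempty := ⟨a, by simp [I, hab.le]⟩
  have hXne : (T.filter (· ≤ b)).Nonempty := ⟨b, by simp [T]⟩
  exact not_monomialFree_Fnlw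
    (J₁ := ⟨T.filter (· ≤ b), hXne, ne_univ_of_notMem fun h => haT (mem_filter.1 h).1⟩)
    (J₂ := ⟨I, ⟨a, mem_insert_self a P⟩, ne_univ_of_notMem hbI⟩)
    (J₃ := ⟨I.filter (· ≤ b), hYne, ne_univ_of_notMem fun h => hbI (mem_filter.1 h).1⟩)
    (J₄ := ⟨T, ⟨b, mem_insert_self b P⟩, ne_univ_of_notMem haT⟩)
    (X_mul_X_sub_X_mul_X_mem_Fnl
      (phiVal_self_exchange (hIcard.trans hTcard.symm) hupper hYne hXne)) hXS hIS hTS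

end Ascent

theorem stmt7_general (K : Type*) [Field K] (n : ℕ)
    (w : Equiv.Perm (Fin n)) (hw : w ∈ Tset K n n) : descendingProp w := by
  by_contra h
  obtain ⟨k, hk, hab, htop⟩ := exists_ascent_of_not_descendingProp h
  exact not_monomialFree_Fnlw_of_ascent K hk hab htop hw.2

theorem stmt7 (K : Type*) [Field K] [CharZero K] (n : ℕ) (hn : 1 ≤ n)
    (w : Equiv.Perm (Fin n)) (hw : w ∈ Tset K n n) : descendingProp w :=
  stmt7_general K n w hw
end

section
/- Let K be a field of characteristic 0, n ≥ 1, 0 ≤ ℓ ≤ n, and w ∈ S_n. Let R = K[P_J : ∅ ≠ J ⊊ {1,…,n}, J ∉ S_w] and let φ_{ℓ,w} : R → K[x_{i,j} : 1 ≤ i, j ≤ n] be the restriction of the monomial map φ_ℓ to R. Then F_{n,ℓ,w} = ker(φ_{ℓ,w}) if and only if F_{n,ℓ,w} is monomial-free. -/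
open MvPolynomial

/-- The restriction `φ_{ℓ,w}` of the monomial map `φ_ℓ` to the subring of
nonvanishing Plücker variables. -/
noncomputable def phiRes (K : Type*) [CommRing K] (n ℓ : ℕ) (w : Equiv.Perm (Fin n)) :
    MvPolynomial (RIdx n w) K →ₐ[K] MvPolynomial (ℕ × ℕ) K :=
  aeval (fun J => phiVal K n ℓ J.1.1)


/-!
Every `phiVal` is `±` a monomial, so `φ_ℓ` and its restriction `φ_{ℓ,w}` send monomials to
nonzero monomials and their kernels are monomial-free. The projection `π_w` is
`MvPolynomial.killCompl` for the inclusion of the surviving variables; being left inverse to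
that inclusion, it gives `ker φ_{ℓ,w} ⊆ F_{n,ℓ,w}`. Conversely, for
`f ∈ F_{n,ℓ}` let `q` be the part of `f` in the surviving variables, so that
`φ_{ℓ,w}(π_w f) = φ_ℓ(q) = -φ_ℓ(f - q)`. If this were nonzero, monomials `x^u` of `q` and `x^v`
of `f - q` would have the same image up to a unit `c`, and `π_w` would send the binomial
`c x^u - x^v ∈ F_{n,ℓ}` to a unit multiple of a monomial in `F_{n,ℓ,w}`.
-/

namespace MvPolynomial

variable {σ τ ι R : Type*}

def unitMonomials (ι R : Type*) [CommSemiring R] : Submonoid (MvPolynomial ι R) where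
  carrier := {p | ∃ (a : Rˣ) (d : ι →₀ ℕ), p = monomial d (a : R)}
  one_mem' := ⟨1, 0, by simp⟩
  mul_mem' := by
    rintro _ _ ⟨a, d, rfl⟩ ⟨b, e, rfl⟩
    exact ⟨a * b, d + e, by simp [monomial_mul]⟩

section CommSemiring

variable [CommSemiring R]

theorem bind₁_monomial_eq_C_mul (g : σ → MvPolynomial ι R) (u : σ →₀ ℕ) (c : R) :
    bind₁ g (monomial u c) = C c * bind₁ g (monomial u 1) := by
  rw [bind₁_monomial, bind₁_monomial, C_1, one_mul]

theorem X_mem_unitMonomials (i : ι) : X i ∈ unitMonomials ι R :=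
  ⟨1, Finsupp.single i 1, by simp [X]⟩

theorem bind₁_monomial_mem_unitMonomials {g : σ → MvPolynomial ι R}
    (hg : ∀ i, g i ∈ unitMonomials ι R) (u : σ →₀ ℕ) :
    bind₁ g (monomial u 1) ∈ unitMonomials ι R := by
  rw [bind₁_monomial, C_1, one_mul]
  exact prod_mem fun i _ => pow_mem (hg i) _

theorem monomialFree_ker_bind₁ [Nontrivial R] {g : σ → MvPolynomial ι R}
    (hg : ∀ i, g i ∈ unitMonomials ι R) : MonomialFree (RingHom.ker (bind₁ g)) := by
  intro u hu
  obtain ⟨a, d, hd⟩ := bind₁_monomial_mem_unitMonomials hg u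
  rw [RingHom.mem_ker, hd, monomial_eq_zero] at hu
  exact a.ne_zero hu

theorem exists_mem_support_of_coeff_bind₁_ne_zero {g : σ → MvPolynomial ι R}
    (hg : ∀ i, g i ∈ unitMonomials ι R) {p : MvPolynomial σ R} {b : ι →₀ ℕ}
    (hb : coeff b (bind₁ g p) ≠ 0) :
    ∃ u ∈ p.support, ∃ a : Rˣ, bind₁ g (monomial u 1) = monomial b (a : R) := by
  classical
  rw [p.as_sum, map_sum, coeff_sum] at hb
  obtain ⟨u, hu, hne⟩ := Finset.exists_ne_zero_of_sum_ne_zero hb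
  obtain ⟨a, d, hd⟩ := bind₁_monomial_mem_unitMonomials hg u
  rw [bind₁_monomial_eq_C_mul, hd, coeff_C_mul, coeff_monomial] at hne
  obtain rfl : d = b := by_contra fun h => hne (by rw [if_neg h, mul_zero])
  exact ⟨u, hu, a, hd⟩

end CommSemiring

section KillCompl

variable [CommRing R] {f : τ → σ} (hf : Function.Injective f) {g : σ → MvPolynomial ι R}

theorem ker_bind₁_comp_le_map_killCompl :
    RingHom.ker (bind₁ (g ∘ f)) ≤ (RingHom.ker (bind₁ g)).map (killCompl hf) := by
  intro p hp
  rw [← killCompl_rename_app hf p]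
  exact Ideal.mem_map_of_mem _ (by rwa [RingHom.mem_ker, bind₁_rename])

theorem bind₁_monomial_ne_C_mul_of_monomialFree
    (hfree : MonomialFree ((RingHom.ker (bind₁ g)).map (killCompl hf)))
    {u v : σ →₀ ℕ} (hu : ↑u.support ⊆ Set.range f) (hv : ¬ ↑v.support ⊆ Set.range f)
    (c : Rˣ) : bind₁ g (monomial v 1) ≠ C (c : R) * bind₁ g (monomial u 1) := by
  intro h
  have hker : monomial u (c : R) - monomial v 1 ∈ RingHom.ker (bind₁ g) := by
    rw [RingHom.mem_ker, map_sub, h, bind₁_monomial_eq_C_mul, sub_self]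
  have hmem := Ideal.mem_map_of_mem (killCompl hf) hker
  rw [map_sub, killCompl_monomial_eq_zero_of_not_subset hf _ hv, sub_zero,
    killCompl_monomial_eq_monomial_comapDomain_of_subset hf _ hu] at hmem
  refine hfree (u.comapDomain f hf.injOn) ?_
  have hunit := Ideal.mul_mem_left _ (C (c⁻¹ : Rˣ).val) hmem
  rwa [C_mul_monomial, Units.inv_mul] at hunit

theorem map_killCompl_ker_le_ker (hg : ∀ i, g i ∈ unitMonomials ι R)
    (hfree : MonomialFree ((RingHom.ker (bind₁ g)).map (killCompl hf))) :
    (RingHom.ker (bind₁ g)).map (killCompl hf) ≤ RingHom.ker (bind₁ (g ∘ f)) := by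
  classical
  rw [Ideal.map_le_iff_le_comap]
  intro p hp
  rw [Ideal.mem_comap, RingHom.mem_ker, ← bind₁_rename]
  set q := rename f (killCompl hf p)
  have hq : ∀ u ∈ q.support, ↑u.support ⊆ Set.range f := by
    intro u hu
    rw [support_rename_of_injective hf, Finset.mem_image] at hu
    obtain ⟨u', -, rfl⟩ := hu
    intro i hi
    obtain ⟨j, -, rfl⟩ := Finset.mem_image.mp (Finsupp.mapDomain_support hi)
    exact ⟨j, rfl⟩
  have hr : ∀ v ∈ (p - q).support, ¬ ↑v.support ⊆ Set.range f := by
    intro v hv hsub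
    rw [mem_support_iff, coeff_sub, ← v.mapDomain_comapDomain f hf hsub,
      coeff_rename_mapDomain f hf, coeff_killCompl, sub_self] at hv
    exact hv rfl
  have hsum : bind₁ g q = -bind₁ g (p - q) := by
    rw [eq_neg_iff_add_eq_zero, ← map_add, add_sub_cancel, RingHom.mem_ker.mp hp]
  by_contra hne
  obtain ⟨b, hb⟩ := ne_zero_iff.mp hne
  obtain ⟨u, hu, a, hau⟩ := exists_mem_support_of_coeff_bind₁_ne_zero hg hb
  rw [hsum, coeff_neg, neg_ne_zero] at hb
  obtain ⟨v, hv, c, hcv⟩ := exists_mem_support_of_coeff_bind₁_ne_zero hg hb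
  refine bind₁_monomial_ne_C_mul_of_monomialFree hf hfree (hq u hu) (hr v hv) (c * a⁻¹) ?_
  rw [hau, hcv, C_mul_monomial, Units.val_mul, mul_assoc, Units.inv_mul, mul_one]

theorem map_killCompl_ker_eq_ker_iff_monomialFree [Nontrivial R]
    (hg : ∀ i, g i ∈ unitMonomials ι R) :
    (RingHom.ker (bind₁ g)).map (killCompl hf) = RingHom.ker (bind₁ (g ∘ f)) ↔
      MonomialFree ((RingHom.ker (bind₁ g)).map (killCompl hf)) :=
  ⟨fun h => h ▸ monomialFree_ker_bind₁ fun i => hg (f i), fun hfree =>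
    le_antisymm (map_killCompl_ker_le_ker hf hg hfree) (ker_bind₁_comp_le_map_killCompl hf)⟩

end KillCompl

end MvPolynomial

theorem phiVal_mem_unitMonomials (K : Type*) [CommRing K] (n ℓ : ℕ) (J : Finset (Fin n)) :
    phiVal K n ℓ J ∈ unitMonomials (ℕ × ℕ) K := by
  have hprod : ∀ (l : List ℕ) (e : ℕ → ℕ × ℕ),
      (l.map fun r => (X (e r) : MvPolynomial (ℕ × ℕ) K)).prod ∈ unitMonomials (ℕ × ℕ) K :=
    fun l e => Submonoid.list_prod_mem _ fun p hp => by
      obtain ⟨r, -, rfl⟩ := List.mem_map.mp hp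
      exact X_mem_unitMonomials (e r)
  unfold phiVal
  dsimp only
  split_ifs
  · exact hprod _ _
  · obtain ⟨a, d, hd⟩ := hprod _ _
    exact ⟨-a, d, by rw [hd, Units.val_neg, map_neg]⟩

theorem piw_eq_killCompl (K : Type*) [CommRing K] {n : ℕ} (w : Equiv.Perm (Fin n)) :
    piw K w = killCompl (f := (Subtype.val : RIdx n w → PIdx n)) Subtype.val_injective := by
  refine algHom_ext fun J => ?_
  by_cases hJ : J.1 ∈ Sw w
  · simp [piw, killCompl, hJ]
  · simp only [piw, killCompl, aeval_X, hJ, ↓reduceDIte, Subtype.range_coe_subtype,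
      Set.mem_ofPred_eq, not_false_eq_true]
    congr 1
    exact ((Equiv.ofInjective _ _).symm_apply_eq.2 (Subtype.ext rfl)).symm

theorem stmt15_general (K : Type*) [Field K] (n ℓ : ℕ)
    (w : Equiv.Perm (Fin n)) :
    Fnlw K n ℓ w = RingHom.ker (phiRes K n ℓ w) ↔ MonomialFree (Fnlw K n ℓ w) := by
  rw [Fnlw, piw_eq_killCompl]
  exact map_killCompl_ker_eq_ker_iff_monomialFree Subtype.val_injective
    fun J => phiVal_mem_unitMonomials K n ℓ J.1

theorem stmt15 (K : Type*) [Field K] [CharZero K] (n ℓ : ℕ) (hn : 1 ≤ n) (hℓ : ℓ ≤ n)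
    (w : Equiv.Perm (Fin n)) :
    Fnlw K n ℓ w = RingHom.ker (phiRes K n ℓ w) ↔ MonomialFree (Fnlw K n ℓ w) :=
  stmt15_general K n ℓ w
end

section
/- Let n ≥ 1, 1 ≤ ℓ ≤ n, and w ∈ P_ℓ. If i < j < k are indices with w_j < w_k < w_i (i.e., the subsequence w_i, w_j, w_k is of type 312), then w_i = w_1 and w_j = ℓ. -/
open MvPolynomial

lemma olList_length' {n : ℕ} (w : Equiv.Perm (Fin n)) : (olList w).length = n := by
  simp [olList]

lemma oneLine_getD' {n : ℕ} (w : Equiv.Perm (Fin n)) (i : ℕ) (h1 : 1 ≤ i) (h2 : i ≤ n) :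
    oneLine w i = (olList w).getD (i-1) 0 := by
  have hi : i - 1 < n := by omega
  rw [oneLine, dif_pos hi, olList, List.getD_eq_getElem _ _ (by simpa using hi)]
  simp

theorem stmt16 (n ℓ : ℕ) (hn : 1 ≤ n) (h1 : 1 ≤ ℓ) (h2 : ℓ ≤ n)
    (w : Equiv.Perm (Fin n)) (hw : w ∈ Pset n ℓ)
    (i j k : ℕ) (hi : 1 ≤ i) (hij : i < j) (hjk : j < k) (hk : k ≤ n)
    (h312a : oneLine w j < oneLine w k) (h312b : oneLine w k < oneLine w i) :
    oneLine w i = oneLine w 1 ∧ oneLine w j = ℓ := by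
  have hnf0 : ¬ List312Free (olList w) := by
    intro h
    have hlen := olList_length' w
    refine h ⟨i-1, j-1, k-1, by omega, by omega, by omega, ?_, ?_⟩
    · rw [← oneLine_getD' w j (by omega) (by omega), ← oneLine_getD' w k (by omega) hk]
      exact h312a
    · rw [← oneLine_getD' w k (by omega) hk, ← oneLine_getD' w i hi (by omega)]
      exact h312b
  by_cases hln : ℓ = n
  · rw [Pset, if_pos hln] at hw
    exact absurd hw hnf0
  rw [Pset, if_neg hln] at hw
  have hA := hw.1
  have hn3 : 3 ≤ n := by omega
  have hlen := olList_length' w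
  rw [oneLine_getD' w i hi (by omega), oneLine_getD' w j (by omega) (by omega),
    oneLine_getD' w 1 (by omega) (by omega)]
  rw [oneLine_getD' w j (by omega) (by omega), oneLine_getD' w k (by omega) hk] at h312a
  rw [oneLine_getD' w k (by omega) hk, oneLine_getD' w i hi (by omega)] at h312b
  obtain ⟨x, y, rest, hl⟩ : ∃ x y rest, olList w = x :: y :: rest := by
    rcases hll : olList w with _ | ⟨x, _ | ⟨y, rest⟩⟩ <;>
      rw [hll] at hlen <;> simp at hlen <;> try omega
    exact ⟨x, y, rest, rfl⟩
  have hnf : ¬ List312Free (olList w) := by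
    intro h; exact h ⟨i-1, j-1, k-1, by omega, by omega, by omega, h312a, h312b⟩
  obtain ⟨hℓ2, hℓ1, hfree⟩ := hA hnf
  rw [oneLine_getD' w 2 (by omega) (by omega)] at hℓ2 hℓ1
  rw [oneLine_getD' w 1 (by omega) (by omega)] at hℓ1
  rw [hl] at hfree h312a h312b hℓ1 hℓ2 hlen ⊢
  norm_num at hℓ2 hℓ1 ⊢
  try simp only [List.getD_cons_zero, List.getD_cons_succ] at hℓ2 hℓ1
  subst hℓ2
  have hxy : x ≠ y := by omega
  rw [List.erase_cons_tail (by simpa using hxy), List.erase_cons_head] at hfree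
  -- set 0-based indices
  set a := i - 1 with ha
  set b := j - 1 with hb
  set c := k - 1 with hc
  have hcb : 2 ≤ c := by omega
  have hrl : rest.length = n - 2 := by simp at hlen; omega
  have key : ∀ t, 2 ≤ t → (x :: y :: rest).getD t 0 = (x :: rest).getD (t-1) 0 := by
    intro t ht
    obtain ⟨s, rfl⟩ : ∃ s, t = s + 2 := ⟨t - 2, by omega⟩
    simp [List.getD_cons_succ]
  by_cases hb1 : b = 1
  · have ha0 : a = 0 := by omega
    simp [ha0, hb1]
  · exfalso
    by_cases ha1 : a = 1
    · -- pattern y=ℓ at position a; use position 0 (value x) instead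
      have hya : (x :: y :: rest).getD a 0 = y := by rw [ha1]; rfl
      refine hfree ⟨0, b - 1, c - 1, by omega, by omega, by simp; omega, ?_, ?_⟩
      · rw [← key b (by omega), ← key c (by omega)]; exact h312a
      · show (x :: rest).getD (c-1) 0 < (x :: rest).getD 0 0
        rw [← key c (by omega)]
        simp only [List.getD_cons_zero]
        omega
    · -- none of a,b,c equals 1
      have hga : (x :: rest).getD (if a = 0 then 0 else a - 1) 0 = (x :: y :: rest).getD a 0 := by
        by_cases h : a = 0
        · simp [h]
        · rw [if_neg h, key a (by omega)]
      refine hfree ⟨(if a = 0 then 0 else a - 1), b - 1, c - 1, by split <;> omega, by omega,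
        by simp; omega, ?_, ?_⟩
      · rw [← key b (by omega), ← key c (by omega)]; exact h312a
      · rw [← key c (by omega), hga]; exact h312b
end

section
/- Let n ≥ 1, 1 ≤ ℓ ≤ n−1, and w ∈ P_ℓ. If w is not 312-free, then the restriction of w to {1,…,w_1} is w|_{w_1} = (w_1, ℓ, w_1−1, w_1−2, …, ℓ+1, ℓ−1, …, 1); that is, its first entry is w_1, its second entry is ℓ, and the remaining entries are the decreasing arrangement of {1,…,w_1−1} ∖ {ℓ}. -/
open MvPolynomial

/-!
Write the one-line notation as `a :: ℓ :: T` with `ℓ < a`. Since deleting `ℓ` leaves a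
312-free word, no two entries of `T` below `a` can increase, so the entries of `T` that are
smaller than `a` appear in decreasing order. They are exactly `{1, …, a - 1} ∖ {ℓ}`, and a
strictly decreasing list is determined by its set of entries.
-/

lemma pairwise_gt_descTo1 (a : ℕ) : (descTo1 a).Pairwise (· > ·) := by
  unfold descTo1
  rw [List.pairwise_map, List.pairwise_reverse]
  exact List.pairwise_lt_range.imp (by omega)

lemma mem_descTo1 {a v : ℕ} : v ∈ descTo1 a ↔ 1 ≤ v ∧ v ≤ a := by
  simp only [descTo1, List.mem_map, List.mem_reverse, List.mem_range]
  exact ⟨by rintro ⟨x, hx, rfl⟩; omega, fun h => ⟨v - 1, by omega, by omega⟩⟩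

lemma three_le_length_of_not_list312Free {l : List ℕ} (h : ¬ List312Free l) :
    3 ≤ l.length := by
  by_contra! hl
  exact h fun ⟨i, j, k, hij, hjk, hk, _⟩ => by omega

lemma List312Free.pairwise_of_cons {a : ℕ} {T : List ℕ} (h : List312Free (a :: T)) :
    T.Pairwise (fun u v => v < a → v ≤ u) := by
  rw [List.pairwise_iff_getElem]
  intro i j hi hj hij hja
  by_contra! hu
  refine h ⟨0, i + 1, j + 1, by omega, by omega, by simpa using hj, ?_, ?_⟩ <;>
    simpa [List.getD_eq_getElem, hi, hj]

lemma filter_le_head_of_list312Free {a ℓ n : ℕ} {T : List ℕ} (hnd : (a :: ℓ :: T).Nodup)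
    (hmem : ∀ v, v ∈ a :: ℓ :: T ↔ 1 ≤ v ∧ v ≤ n) (hℓa : ℓ < a)
    (h312 : List312Free (a :: T)) :
    (a :: ℓ :: T).filter (· ≤ a) = a :: ℓ :: (descTo1 (a - 1)).filter (· ≠ ℓ) := by
  obtain ⟨⟨-, haT⟩, hℓT, hT⟩ : (a ≠ ℓ ∧ a ∉ T) ∧ ℓ ∉ T ∧ T.Nodup := by simpa using hnd
  have hmemT : ∀ v, v ∈ T.filter (· ≤ a) ↔ v ∈ (descTo1 (a - 1)).filter (· ≠ ℓ) := by
    intro v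
    simp only [List.mem_filter, mem_descTo1, decide_eq_true_eq]
    constructor
    · rintro ⟨hv, hva⟩
      have hv1 : 1 ≤ v := ((hmem v).1 (by simp [hv])).1
      have hva' : v ≠ a := fun h => haT (h ▸ hv)
      have hvℓ : v ≠ ℓ := fun h => hℓT (h ▸ hv)
      omega
    · rintro ⟨⟨h1, hva⟩, hvℓ⟩
      have han : a ≤ n := ((hmem a).1 (by simp)).2
      obtain rfl | rfl | hv : v = a ∨ v = ℓ ∨ v ∈ T := by simpa using (hmem v).2 ⟨h1, by omega⟩
      exacts [by omega, absurd rfl hvℓ, ⟨hv, by omega⟩]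
  have hdecT : (T.filter (· ≤ a)).Pairwise (· > ·) := by
    refine ((h312.pairwise_of_cons.and hT).filter _).imp_of_mem fun {u v} hu hv ⟨hle, hne⟩ => ?_
    simp only [List.mem_filter, decide_eq_true_eq] at hu hv
    have hva : v ≠ a := fun h => haT (h ▸ hv.1)
    exact lt_of_le_of_ne (hle (by omega)) (Ne.symm hne)
  rw [List.filter_cons_of_pos (by simp), List.filter_cons_of_pos (by simpa using hℓa.le),
    hdecT.eq_of_mem_iff ((pairwise_gt_descTo1 _).filter _) hmemT]

section OneLine

variable {n : ℕ} (w : Equiv.Perm (Fin n))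

lemma length_olList : (olList w).length = n := by
  simp [olList]

lemma nodup_olList : (olList w).Nodup :=
  (List.nodup_finRange n).map fun i j hij => w.injective (Fin.ext (by simpa using hij))

lemma mem_olList {v : ℕ} : v ∈ olList w ↔ 1 ≤ v ∧ v ≤ n := by
  simp only [olList, List.mem_map, List.mem_finRange, true_and]
  constructor
  · rintro ⟨i, rfl⟩
    omega
  · rintro ⟨h1, h2⟩
    exact ⟨w.symm ⟨v - 1, by omega⟩, by simp; omega⟩

lemma oneLine_eq_getD_olList (i : ℕ) : oneLine w i = (olList w).getD (i - 1) 0 := by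
  unfold oneLine
  split_ifs with h
  · simp [olList, h]
  · rw [List.getD_eq_default _ _ (by rw [length_olList]; omega)]

end OneLine

theorem stmt17_general (n ℓ : ℕ)
    (w : Equiv.Perm (Fin n)) (hw : w ∈ Pset n ℓ) (h : ¬ List312Free (olList w)) :
    (olList w).filter (fun v => v ≤ oneLine w 1) =
      oneLine w 1 :: ℓ :: ((descTo1 (oneLine w 1 - 1)).filter (fun v => v ≠ ℓ)) := by
  have hℓn : ℓ ≠ n := by
    rintro rfl
    exact h (by simpa [Pset] using hw)
  rw [Pset, if_neg hℓn] at hw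
  obtain ⟨hℓ, hℓa, h312⟩ := hw.1 h
  obtain ⟨a, b, T, hL⟩ : ∃ a b T, olList w = a :: b :: T := by
    match olList w, three_le_length_of_not_list312Free h with
    | a :: b :: T, _ => exact ⟨a, b, T, rfl⟩
  simp only [oneLine_eq_getD_olList, hL, Nat.sub_self, List.getD_cons_zero,
    Nat.add_one_sub_one, List.getD_cons_succ] at hℓ hℓa ⊢
  subst hℓ
  rw [hL, List.erase_cons_tail (by simpa using hℓa.ne'), List.erase_cons_head] at h312
  exact filter_le_head_of_list312Free (hL ▸ nodup_olList w)
    (fun v => hL ▸ mem_olList w) hℓa h312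

theorem stmt17 (n ℓ : ℕ) (hn : 1 ≤ n) (h1 : 1 ≤ ℓ) (h2 : ℓ ≤ n - 1)
    (w : Equiv.Perm (Fin n)) (hw : w ∈ Pset n ℓ) (h : ¬ List312Free (olList w)) :
    (olList w).filter (fun v => v ≤ oneLine w 1) =
      oneLine w 1 :: ℓ :: ((descTo1 (oneLine w 1 - 1)).filter (fun v => v ≠ ℓ)) :=
  stmt17_general n ℓ w hw h
end
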